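/- arXiv:2111.03273 — 5 statements merged into one kernel-verified Lean document; each statement's English description precedes it below -/
import Mathlib

section
/- Let d ≥ 1, k ≥ 0, and let φ ∈ ℂ^d be a unit vector. Then: (i) ∫ |⟨φ,u⟩|^{2k} dμ_d(u) = 1/C(d+k-1, k); (ii) C(d+k-1, k) · ∫ |⟨φ,u⟩|^{2(k+1)} dμ_d(u) = (k+1)/(d+k); (iii) C(d+k-1, k) · ∫ |⟨φ,u⟩|^{2(k+2)} dμ_d(u) = (k+1)(k+2)/((d+k)(d+k+1)); consequently the variance of |⟨φ,u⟩|^2 when u is drawn from the measure with density C(d+k-1,k)·|⟨φ,u⟩|^{2k} with respect to μ_d equals (d-1)(k+1)/((d+k)^2 (d+k+1)). -/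
open MeasureTheory

noncomputable section

/-- `ℂ^d`. -/
abbrev Cvec (d : ℕ) : Type := EuclideanSpace ℂ (Fin d)

instance (d : ℕ) : MeasurableSpace (Cvec d) := borel _
instance (d : ℕ) : BorelSpace (Cvec d) := ⟨rfl⟩

/-- The unit sphere of `ℂ^d`. -/
abbrev USphere (d : ℕ) := Metric.sphere (0 : Cvec d) 1

/-- The action of a unitary (linear isometric equivalence) on the unit sphere. -/
def sphereRot (d : ℕ) (e : Cvec d ≃ₗᵢ[ℂ] Cvec d) (x : USphere d) : USphere d :=
  ⟨e x, by
    have hx : ‖(x : Cvec d)‖ = 1 := mem_sphere_zero_iff_norm.mp x.2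
    simp [mem_sphere_zero_iff_norm, e.norm_map, hx]⟩

/-- `μ` is the uniform (rotation-invariant) probability measure on the unit sphere of `ℂ^d`. -/
def IsUniformOnSphere (d : ℕ) (μ : Measure (USphere d)) : Prop :=
  IsProbabilityMeasure μ ∧
    ∀ e : Cvec d ≃ₗᵢ[ℂ] Cvec d, μ.map (sphereRot d e) = μ

/-!
Unitary invariance of `μ` makes `∫ g ⟪φ, u⟫ dμ` independent of the unit vector `φ`, and the
phase rotation `φ ↦ ω φ` fixing `φᗮ` shows that a monomial `⟪φ, u⟫ ^ p * conj ⟪φ, u⟫ ^ q` with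
`p ≠ q`, times any function of `⟪ψ, u⟫` with `ψ ⊥ φ`, integrates to zero. Hence the moment of order
`2m` of `√s φ + ψ`, which is `(s + 1) ^ m` times that of `φ`, expands as
`∑ C(m, j)² s ^ j ∫ ‖⟪φ, u⟫‖ ^ (2j) ‖⟪ψ, u⟫‖ ^ (2(m - j))`, and comparing coefficients in `s` gives
`C(m, j) ∫ ‖⟪φ, u⟫‖ ^ (2j) ‖⟪ψ, u⟫‖ ^ (2(m - j)) = ∫ ‖⟪φ, u⟫‖ ^ (2m)`. Writing
`1 = ∑ᵢ ‖⟪bᵢ, u⟫‖²` for an orthonormal basis `b` through `φ` then yields the recursion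
`(m + d) I_{m+1} = (m + 1) I_m` for `I_m = ∫ ‖⟪φ, u⟫‖ ^ (2m)`, from which all four identities
follow.
-/

open scoped InnerProductSpace ComplexConjugate
open Finset

section Unitary

variable {E : Type*} [NormedAddCommGroup E] [InnerProductSpace ℂ E]

theorem exists_orthonormalBasis_apply_eq {ι : Type*} [Fintype ι] [FiniteDimensional ℂ E]
    (hcard : Module.finrank ℂ E = Fintype.card ι) (i₀ : ι) {φ : E} (hφ : ‖φ‖ = 1) :
    ∃ b : OrthonormalBasis ι ℂ E, b i₀ = φ := by
  have horth : Orthonormal ℂ (Set.domRestrict {i₀} fun _ : ι ↦ φ) :=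
    ⟨fun _ ↦ hφ, fun i j hij ↦ absurd (Subsingleton.elim i j) hij⟩
  obtain ⟨b, hb⟩ := horth.exists_orthonormalBasis_extension_of_card_eq hcard
  exact ⟨b, hb i₀ rfl⟩

theorem exists_linearIsometryEquiv_apply_eq {ι : Type*} [Fintype ι] [FiniteDimensional ℂ E]
    (hcard : Module.finrank ℂ E = Fintype.card ι) (i₀ : ι) {φ ψ : E} (hφ : ‖φ‖ = 1)
    (hψ : ‖ψ‖ = 1) : ∃ e : E ≃ₗᵢ[ℂ] E, e φ = ψ := by
  obtain ⟨b₁, rfl⟩ := exists_orthonormalBasis_apply_eq hcard i₀ hφ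
  obtain ⟨b₂, rfl⟩ := exists_orthonormalBasis_apply_eq hcard i₀ hψ
  classical
  exact ⟨b₁.repr.trans b₂.repr.symm, by simp⟩

theorem exists_linearIsometryEquiv_phase [FiniteDimensional ℂ E] {φ : E} (hφ : ‖φ‖ = 1)
    {ω : ℂ} (hω : ‖ω‖ = 1) :
    ∃ e : E ≃ₗᵢ[ℂ] E, e φ = ω • φ ∧ ∀ ψ : E, ⟪φ, ψ⟫_ℂ = 0 → e ψ = ψ := by
  have hφφ : ⟪φ, φ⟫_ℂ = 1 := by simp [inner_self_eq_norm_sq_to_K, hφ]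
  have hωω : conj ω * ω = 1 := by
    rw [mul_comm, Complex.mul_conj, Complex.normSq_eq_norm_sq, hω]; norm_num
  let L : E →ₗ[ℂ] E := LinearMap.id + (ω - 1) • (innerSL ℂ φ).toLinearMap.smulRight φ
  have hL : ∀ x, L x = x + ((ω - 1) * ⟪φ, x⟫_ℂ) • φ := fun x ↦ by simp [L, smul_smul]
  have hLinner : ∀ x y, ⟪L x, L y⟫_ℂ = ⟪x, y⟫_ℂ := fun x y ↦ by
    simp only [hL, inner_add_left, inner_add_right, inner_smul_left, inner_smul_right, hφφ,
      map_mul, map_sub, map_one, ← inner_conj_symm x φ]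
    linear_combination (conj ⟪φ, x⟫_ℂ * ⟪φ, y⟫_ℂ) * hωω
  refine ⟨(L.isometryOfInner hLinner).toLinearIsometryEquiv rfl, ?_, fun ψ hψ ↦ ?_⟩
  · change L φ = ω • φ
    rw [hL, hφφ, mul_one, sub_smul, one_smul, add_sub_cancel]
  · change L ψ = ψ
    rw [hL, hψ, mul_zero, zero_smul, add_zero]

end Unitary

theorem exists_norm_eq_one_pow_mul_conj_pow_eq_neg_one {p q : ℕ} (hpq : p ≠ q) :
    ∃ ω : ℂ, ‖ω‖ = 1 ∧ ω ^ p * conj ω ^ q = -1 := by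
  have hpq' : (p : ℝ) - q ≠ 0 := sub_ne_zero.mpr (by exact_mod_cast hpq)
  set θ : ℝ := Real.pi / ((p : ℝ) - q)
  refine ⟨Complex.exp (θ * Complex.I), by simp [Complex.norm_exp], ?_⟩
  rw [← Complex.exp_conj, map_mul, Complex.conj_I, Complex.conj_ofReal, ← Complex.exp_nat_mul,
    ← Complex.exp_nat_mul, ← Complex.exp_add, ← Complex.exp_pi_mul_I]
  congr 1
  have : ((p : ℝ) - q) * θ = Real.pi := mul_div_cancel₀ _ hpq'
  rw [← this]
  push_cast
  ring

theorem ofReal_norm_pow_two_mul (z : ℂ) (m : ℕ) :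
    ((‖z‖ ^ (2 * m) : ℝ) : ℂ) = z ^ m * conj z ^ m := by
  rw [← mul_pow, Complex.mul_conj, pow_mul, Complex.sq_norm]
  push_cast
  rfl

theorem ofReal_norm_mul_add_pow_two_mul (t : ℝ) (z w : ℂ) (m : ℕ) :
    ((‖t * z + w‖ ^ (2 * m) : ℝ) : ℂ) = ∑ j ∈ range (m + 1), ∑ l ∈ range (m + 1),
      (m.choose j * m.choose l * t ^ (j + l) : ℂ) *
        (z ^ j * conj z ^ l * (w ^ (m - j) * conj w ^ (m - l))) := by
  rw [ofReal_norm_pow_two_mul, map_add, map_mul, Complex.conj_ofReal, add_pow, add_pow,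
    sum_mul_sum]
  refine sum_congr rfl fun j _ ↦ sum_congr rfl fun l _ ↦ ?_
  ring

open Polynomial in
theorem eq_of_forall_pos_sum_mul_pow_eq {m : ℕ} {a b : ℕ → ℝ}
    (h : ∀ s : ℝ, 0 < s → ∑ i ∈ range (m + 1), a i * s ^ i = ∑ i ∈ range (m + 1), b i * s ^ i)
    {j : ℕ} (hj : j ≤ m) : a j = b j := by
  have hcoeff : ∀ c : ℕ → ℝ, (∑ i ∈ range (m + 1), C (c i) * X ^ i).coeff j = c j := fun c ↦ by
    simp [Nat.lt_succ_of_le hj]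
  have hP := eq_of_infinite_eval_eq (∑ i ∈ range (m + 1), C (a i) * X ^ i)
    (∑ i ∈ range (m + 1), C (b i) * X ^ i) <| (Set.Ioi_infinite 0).mono fun s hs ↦ by
      simpa [eval_finsetSum] using h s hs
  rw [← hcoeff a, hP, hcoeff]

theorem normalized_moments_of_recursion {d k C I₀ I₁ I₂ : ℝ} (hdk : 0 < d + k)
    (h₀ : C * I₀ = 1) (h₁ : (k + d) * I₁ = (k + 1) * I₀)
    (h₂ : (k + 1 + d) * I₂ = (k + 1 + 1) * I₁) :
    I₀ = 1 / C ∧ C * I₁ = (k + 1) / (d + k) ∧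
      C * I₂ = (k + 1) * (k + 2) / ((d + k) * (d + k + 1)) ∧
      C * I₂ - (C * I₁) ^ 2 = (d - 1) * (k + 1) / ((d + k) ^ 2 * (d + k + 1)) := by
  have r₁ : (d + k) * (C * I₁) = k + 1 := by linear_combination C * h₁ + (k + 1) * h₀
  have e₁ : C * I₁ = (k + 1) / (d + k) := by
    rw [eq_div_iff hdk.ne']
    linear_combination r₁
  have e₂ : C * I₂ = (k + 1) * (k + 2) / ((d + k) * (d + k + 1)) := by
    rw [eq_div_iff (by positivity)]
    linear_combination (d + k) * C * h₂ + (k + 2) * r₁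
  refine ⟨?_, e₁, e₂, ?_⟩
  · rw [eq_div_iff (left_ne_zero_of_mul_eq_one h₀)]
    linear_combination h₀
  · rw [e₁, e₂]
    field_simp
    ring

theorem Continuous.integrable_of_compactSpace {X E : Type*} [TopologicalSpace X] [CompactSpace X]
    [MeasurableSpace X] [OpensMeasurableSpace X] {μ : Measure X} [IsFiniteMeasure μ]
    [NormedAddCommGroup E] {f : X → E} (hf : Continuous f) : Integrable f μ :=
  hf.integrable_of_hasCompactSupport (.of_compactSpace f)

variable {d : ℕ}

def sphereCoord (φ : Cvec d) (u : USphere d) : ℂ := ⟪φ, (u : Cvec d)⟫_ℂ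

@[fun_prop]
theorem continuous_sphereCoord (φ : Cvec d) : Continuous (sphereCoord φ) :=
  continuous_const.inner continuous_subtype_val

@[fun_prop]
theorem continuous_sphereRot (e : Cvec d ≃ₗᵢ[ℂ] Cvec d) : Continuous (sphereRot d e) :=
  (e.continuous.comp continuous_subtype_val).subtype_mk _

theorem sphereCoord_sphereRot (φ : Cvec d) (e : Cvec d ≃ₗᵢ[ℂ] Cvec d) (u : USphere d) :
    sphereCoord φ (sphereRot d e u) = sphereCoord (e.symm φ) u := by
  simp only [sphereCoord, sphereRot, ← e.inner_map_map (e.symm φ), e.apply_symm_apply]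

theorem sphereCoord_smul (c : ℂ) (φ : Cvec d) (u : USphere d) :
    sphereCoord (c • φ) u = conj c * sphereCoord φ u :=
  inner_smul_left _ _ _

theorem sphereCoord_add (φ ψ : Cvec d) (u : USphere d) :
    sphereCoord (φ + ψ) u = sphereCoord φ u + sphereCoord ψ u :=
  inner_add_left _ _ _

theorem sum_norm_sq_sphereCoord {ι : Type*} [Fintype ι] (b : OrthonormalBasis ι ℂ (Cvec d))
    (u : USphere d) : ∑ i, ‖sphereCoord (b i) u‖ ^ 2 = 1 := by
  simp [sphereCoord, b.sum_sq_norm_inner_right, norm_eq_of_mem_sphere u]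

namespace IsUniformOnSphere

variable {μ : Measure (USphere d)} (hμ : IsUniformOnSphere d μ)
include hμ

theorem integral_comp_sphereRot {E : Type*} [NormedAddCommGroup E] [NormedSpace ℝ E]
    (e : Cvec d ≃ₗᵢ[ℂ] Cvec d) {f : USphere d → E}
    (hf : Continuous f) : ∫ u, f (sphereRot d e u) ∂μ = ∫ u, f u ∂μ := by
  conv_rhs => rw [← hμ.2 e]
  rw [integral_map (continuous_sphereRot e).aemeasurable hf.aestronglyMeasurable]

theorem integral_comp_sphereCoord_eq (hd : 1 ≤ d) {φ ψ : Cvec d} (hφ : ‖φ‖ = 1)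
    (hψ : ‖ψ‖ = 1) {E : Type*} [NormedAddCommGroup E] [NormedSpace ℝ E] {g : ℂ → E}
    (hg : Continuous g) :
    ∫ u, g (sphereCoord φ u) ∂μ = ∫ u, g (sphereCoord ψ u) ∂μ := by
  obtain ⟨e, rfl⟩ := exists_linearIsometryEquiv_apply_eq (by simp) (⟨0, hd⟩ : Fin d) hψ hφ
  rw [← hμ.integral_comp_sphereRot e (f := fun u ↦ g (sphereCoord (e ψ) u)) (by fun_prop)]
  simp only [sphereCoord_sphereRot, e.symm_apply_apply]

theorem integral_norm_sphereCoord_pow (hd : 1 ≤ d) {φ : Cvec d} (hφ : ‖φ‖ = 1) (v : Cvec d)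
    (n : ℕ) : ∫ u, ‖sphereCoord v u‖ ^ n ∂μ = ‖v‖ ^ n * ∫ u, ‖sphereCoord φ u‖ ^ n ∂μ := by
  rcases eq_or_ne v 0 with rfl | hv
  · cases n <;> simp [sphereCoord]
  have hv' : ‖(‖v‖⁻¹ : ℂ) • v‖ = 1 := by simp [norm_smul, hv]
  have hvv : v = (‖v‖ : ℂ) • (‖v‖⁻¹ : ℂ) • v := by simp [smul_smul, hv]
  rw [← hμ.integral_comp_sphereCoord_eq hd hv' hφ (g := fun z ↦ ‖z‖ ^ n) (by fun_prop),
    ← integral_const_mul]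
  conv_lhs => rw [hvv]
  simp only [sphereCoord_smul, norm_mul, Complex.norm_conj, Complex.norm_real, norm_norm, mul_pow]

theorem integral_pow_mul_conj_pow_mul_eq_zero {φ ψ : Cvec d} (hφ : ‖φ‖ = 1)
    (hφψ : ⟪φ, ψ⟫_ℂ = 0) {p q : ℕ} (hpq : p ≠ q) {g : ℂ → ℂ} (hg : Continuous g) :
    ∫ u, sphereCoord φ u ^ p * conj (sphereCoord φ u) ^ q * g (sphereCoord ψ u) ∂μ = 0 := by
  obtain ⟨ω, hω, hωpq⟩ := exists_norm_eq_one_pow_mul_conj_pow_eq_neg_one hpq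
  obtain ⟨e, heφ, heψ⟩ := exists_linearIsometryEquiv_phase hφ hω
  have hωω : ω * conj ω = 1 := by
    rw [Complex.mul_conj, Complex.normSq_eq_norm_sq, hω]; norm_num
  have hsymmφ : e.symm φ = conj ω • φ := by
    rw [e.symm_apply_eq, map_smul, heφ, smul_smul, mul_comm, hωω, one_smul]
  have hsymmψ : e.symm ψ = ψ := by rw [e.symm_apply_eq, heψ ψ hφψ]
  have hinv := hμ.integral_comp_sphereRot e
    (f := fun u ↦ sphereCoord φ u ^ p * conj (sphereCoord φ u) ^ q * g (sphereCoord ψ u))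
    (by fun_prop)
  simp only [sphereCoord_sphereRot, hsymmφ, hsymmψ, sphereCoord_smul, Complex.conj_conj,
    map_mul, mul_pow] at hinv
  simp only [show ∀ a b c : ℂ, ω ^ p * a * (conj ω ^ q * b) * c
      = (ω ^ p * conj ω ^ q) * (a * b * c) from fun _ _ _ ↦ by ring,
    hωpq, integral_const_mul] at hinv
  linear_combination -hinv / 2

section Finite

variable [IsFiniteMeasure μ]

theorem integral_norm_sphereCoord_mul_add_pow {φ ψ : Cvec d} (hφ : ‖φ‖ = 1)
    (hφψ : ⟪φ, ψ⟫_ℂ = 0) (t : ℝ) (m : ℕ) :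
    ∫ u, ‖sphereCoord ((t : ℂ) • φ + ψ) u‖ ^ (2 * m) ∂μ
      = ∑ j ∈ range (m + 1), (m.choose j : ℝ) ^ 2 * t ^ (2 * j) *
          ∫ u, ‖sphereCoord φ u‖ ^ (2 * j) * ‖sphereCoord ψ u‖ ^ (2 * (m - j)) ∂μ := by
  set T : ℕ → ℕ → USphere d → ℂ := fun j l u ↦ sphereCoord φ u ^ j * conj (sphereCoord φ u) ^ l *
    (sphereCoord ψ u ^ (m - j) * conj (sphereCoord ψ u) ^ (m - l))
  have hT : ∀ j l, Integrable (T j l) μ := fun j l ↦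
    Continuous.integrable_of_compactSpace (by fun_prop)
  have hoff : ∀ j l, j ≠ l → ∫ u, T j l u ∂μ = 0 := fun j l hjl ↦
    hμ.integral_pow_mul_conj_pow_mul_eq_zero hφ hφψ hjl
      (g := fun w ↦ w ^ (m - j) * conj w ^ (m - l)) (by fun_prop)
  have hdiag : ∀ j, ∫ u, T j j u ∂μ
      = ((∫ u, ‖sphereCoord φ u‖ ^ (2 * j) * ‖sphereCoord ψ u‖ ^ (2 * (m - j)) ∂μ : ℝ) : ℂ) := by
    intro j
    rw [← integral_complex_ofReal]
    refine integral_congr_ae (.of_forall fun u ↦ ?_)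
    simp only [T, Complex.ofReal_mul, ofReal_norm_pow_two_mul]
  apply Complex.ofReal_injective
  simp only [sphereCoord_add, sphereCoord_smul, Complex.conj_ofReal]
  calc _ = ∑ j ∈ range (m + 1), ∑ l ∈ range (m + 1),
        (m.choose j * m.choose l * t ^ (j + l) : ℂ) * ∫ u, T j l u ∂μ := by
        simp only [← integral_complex_ofReal, ofReal_norm_mul_add_pow_two_mul]
        rw [integral_finsetSum _ fun j _ ↦ integrable_finsetSum _ fun l _ ↦ (hT j l).const_mul _]
        refine sum_congr rfl fun j _ ↦ ?_
        rw [integral_finsetSum _ fun l _ ↦ (hT j l).const_mul _]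
        exact sum_congr rfl fun l _ ↦ integral_const_mul _ _
    _ = ∑ j ∈ range (m + 1), (m.choose j * m.choose j * t ^ (j + j) : ℂ) * ∫ u, T j j u ∂μ :=
        sum_congr rfl fun j hj ↦ sum_eq_single_of_mem j hj fun l _ hlj ↦ by
          rw [hoff j l hlj.symm, mul_zero]
    _ = _ := by
        push_cast
        refine sum_congr rfl fun j _ ↦ ?_
        rw [hdiag]
        ring

theorem choose_mul_integral_mixed_moment (hd : 1 ≤ d) {φ ψ : Cvec d} (hφ : ‖φ‖ = 1)
    (hψ : ‖ψ‖ = 1) (hφψ : ⟪φ, ψ⟫_ℂ = 0) {m j : ℕ} (hj : j ≤ m) :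
    (m.choose j : ℝ) * ∫ u, ‖sphereCoord φ u‖ ^ (2 * j) * ‖sphereCoord ψ u‖ ^ (2 * (m - j)) ∂μ
      = ∫ u, ‖sphereCoord φ u‖ ^ (2 * m) ∂μ := by
  set M : ℕ → ℝ := fun i ↦ ∫ u, ‖sphereCoord φ u‖ ^ (2 * i) * ‖sphereCoord ψ u‖ ^ (2 * (m - i)) ∂μ
  set I := ∫ u, ‖sphereCoord φ u‖ ^ (2 * m) ∂μ
  have hpoly : ∀ s : ℝ, 0 < s → ∑ i ∈ range (m + 1), ((m.choose i : ℝ) ^ 2 * M i) * s ^ i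
      = ∑ i ∈ range (m + 1), ((m.choose i : ℝ) * I) * s ^ i := fun s hs ↦ by
    have hnorm : ‖((√s : ℝ) : ℂ) • φ + ψ‖ ^ 2 = s + 1 := by
      rw [sq, norm_add_sq_eq_norm_sq_add_norm_sq_of_inner_eq_zero _ _
        (by rw [inner_smul_left, hφψ, mul_zero]), norm_smul, Complex.norm_real,
        Real.norm_of_nonneg (Real.sqrt_nonneg s), hφ, hψ]
      nlinarith [Real.sq_sqrt hs.le]
    calc ∑ i ∈ range (m + 1), ((m.choose i : ℝ) ^ 2 * M i) * s ^ i
        = ∫ u, ‖sphereCoord (((√s : ℝ) : ℂ) • φ + ψ) u‖ ^ (2 * m) ∂μ := by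
          rw [hμ.integral_norm_sphereCoord_mul_add_pow hφ hφψ]
          refine sum_congr rfl fun i _ ↦ ?_
          rw [pow_mul, Real.sq_sqrt hs.le]
          ring
      _ = (s + 1) ^ m * I := by
          rw [hμ.integral_norm_sphereCoord_pow hd hφ, pow_mul, hnorm]
      _ = ∑ i ∈ range (m + 1), ((m.choose i : ℝ) * I) * s ^ i := by
          rw [add_pow, sum_mul]
          refine sum_congr rfl fun i _ ↦ ?_
          ring
  have hcoeff := eq_of_forall_pos_sum_mul_pow_eq hpoly hj
  have hchoose : (m.choose j : ℝ) ≠ 0 := by exact_mod_cast (Nat.choose_pos hj).ne'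
  exact mul_left_cancel₀ hchoose (by linear_combination hcoeff)

theorem moment_succ (hd : 1 ≤ d) {φ : Cvec d} (hφ : ‖φ‖ = 1) (m : ℕ) :
    ((m : ℝ) + d) * ∫ u, ‖sphereCoord φ u‖ ^ (2 * (m + 1)) ∂μ
      = ((m : ℝ) + 1) * ∫ u, ‖sphereCoord φ u‖ ^ (2 * m) ∂μ := by
  set i₀ : Fin d := ⟨0, hd⟩
  obtain ⟨b, hb⟩ := exists_orthonormalBasis_apply_eq (by simp) i₀ hφ
  set I : ℕ → ℝ := fun n ↦ ∫ u, ‖sphereCoord φ u‖ ^ (2 * n) ∂μ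
  have hint : ∀ i, Integrable (fun u ↦ ‖sphereCoord φ u‖ ^ (2 * m) * ‖sphereCoord (b i) u‖ ^ 2) μ :=
    fun i ↦ Continuous.integrable_of_compactSpace (by fun_prop)
  have hsplit : I m = ∑ i, ∫ u, ‖sphereCoord φ u‖ ^ (2 * m) * ‖sphereCoord (b i) u‖ ^ 2 ∂μ := by
    simp only [I, ← integral_finsetSum _ fun i _ ↦ hint i, ← mul_sum, sum_norm_sq_sphereCoord,
      mul_one]
  have hterm : ∀ i, ((m : ℝ) + 1) * ∫ u, ‖sphereCoord φ u‖ ^ (2 * m) * ‖sphereCoord (b i) u‖ ^ 2 ∂μ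
      = I (m + 1) + if i = i₀ then m * I (m + 1) else 0 := by
    intro i
    split_ifs with hi
    · subst hi
      simp only [I, hb, ← pow_add]
      ring_nf
    · have hφb : ⟪φ, b i⟫_ℂ = 0 := by rw [← hb, b.inner_eq_zero (Ne.symm hi)]
      have := hμ.choose_mul_integral_mixed_moment hd hφ (b.norm_eq_one i) hφb (Nat.le_succ m)
      simpa [Nat.choose_succ_self_right] using this
  calc ((m : ℝ) + d) * I (m + 1) = ∑ i, (I (m + 1) + if i = i₀ then m * I (m + 1) else 0) := by
        simp only [sum_add_distrib, sum_const, card_univ, Fintype.card_fin, nsmul_eq_mul,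
          sum_ite_eq', mem_univ, ↓reduceIte]
        ring
    _ = ((m : ℝ) + 1) * I m := by rw [hsplit, mul_sum]; exact (sum_congr rfl fun i _ ↦ hterm i).symm

end Finite

theorem choose_mul_moment_eq_one (hd : 1 ≤ d) {φ : Cvec d} (hφ : ‖φ‖ = 1) (k : ℕ) :
    ((d + k - 1).choose k : ℝ) * ∫ u, ‖sphereCoord φ u‖ ^ (2 * k) ∂μ = 1 := by
  have := hμ.1
  induction k with
  | zero => simp
  | succ k ih =>
    have hchoose : ((d : ℝ) + k) * (d + k - 1).choose k = (d + k).choose (k + 1) * (k + 1) := by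
      have := Nat.add_one_mul_choose_eq (d + k - 1) k
      rw [Nat.sub_add_cancel (by omega)] at this
      exact_mod_cast this
    have hdk : (k : ℝ) + d ≠ 0 := by positivity
    apply mul_left_cancel₀ hdk
    rw [show d + (k + 1) - 1 = d + k by omega]
    linear_combination ((d + k).choose (k + 1) : ℝ) * hμ.moment_succ hd hφ k
      - (∫ u, ‖sphereCoord φ u‖ ^ (2 * k) ∂μ) * hchoose + ((d : ℝ) + k) * ih

end IsUniformOnSphere

/-- Moments of `|⟨φ,u⟩|²` under the standard POVM outcome distribution:
(i) `∫ |⟨φ,u⟩|^{2k} dμ = 1/C(d+k-1,k)`;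
(ii) `C(d+k-1,k) · ∫ |⟨φ,u⟩|^{2(k+1)} dμ = (k+1)/(d+k)`;
(iii) `C(d+k-1,k) · ∫ |⟨φ,u⟩|^{2(k+2)} dμ = (k+1)(k+2)/((d+k)(d+k+1))`;
and consequently the variance of `|⟨φ,u⟩|²` under the density `C(d+k-1,k)·|⟨φ,u⟩|^{2k}`
equals `(d-1)(k+1)/((d+k)²(d+k+1))`. -/
theorem stmt1 (d k : ℕ) (hd : 1 ≤ d)
    (μ : Measure (USphere d)) (hμ : IsUniformOnSphere d μ)
    (φ : Cvec d) (hφ : ‖φ‖ = 1) :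
    (∫ u : USphere d, ‖(inner ℂ φ (u : Cvec d) : ℂ)‖ ^ (2 * k) ∂μ)
        = 1 / (Nat.choose (d + k - 1) k : ℝ) ∧
    (Nat.choose (d + k - 1) k : ℝ) *
        (∫ u : USphere d, ‖(inner ℂ φ (u : Cvec d) : ℂ)‖ ^ (2 * (k + 1)) ∂μ)
        = ((k : ℝ) + 1) / ((d : ℝ) + k) ∧
    (Nat.choose (d + k - 1) k : ℝ) *
        (∫ u : USphere d, ‖(inner ℂ φ (u : Cvec d) : ℂ)‖ ^ (2 * (k + 2)) ∂μ)
        = (((k : ℝ) + 1) * ((k : ℝ) + 2)) / (((d : ℝ) + k) * ((d : ℝ) + k + 1)) ∧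
    (Nat.choose (d + k - 1) k : ℝ) *
        (∫ u : USphere d, ‖(inner ℂ φ (u : Cvec d) : ℂ)‖ ^ (2 * (k + 2)) ∂μ)
      - ((Nat.choose (d + k - 1) k : ℝ) *
          (∫ u : USphere d, ‖(inner ℂ φ (u : Cvec d) : ℂ)‖ ^ (2 * (k + 1)) ∂μ)) ^ 2
        = ((d : ℝ) - 1) * ((k : ℝ) + 1) / (((d : ℝ) + k) ^ 2 * ((d : ℝ) + k + 1)) := by
  have := hμ.1
  have h₂ := hμ.moment_succ hd hφ (k + 1)
  push_cast at h₂
  exact normalized_moments_of_recursion (by positivity) (hμ.choose_mul_moment_eq_one hd hφ k)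
    (hμ.moment_succ hd hφ k) h₂

end
end

section
/- Let ε ∈ (0, 1/2], let k ≥ 1, and define ψ₀ = √(1/2−ε)·e₀ + √(1/2+ε)·e₁ and ψ₁ = √(1/2+ε)·e₀ + √(1/2−ε)·e₁ in ℂ², where e₀, e₁ is the standard orthonormal basis. Let M be a positive semidefinite complex matrix indexed by (Fin k → Fin 2) such that I − M is also positive semidefinite. If Tr(M · |ψ₁⟩⟨ψ₁|^{⊗k}) − Tr(M · |ψ₀⟩⟨ψ₀|^{⊗k}) ≥ 1/3, then k ≥ 1/(36 ε²). Hence any algorithm estimating the inner product Tr(ρσ) of two states from k copies each to additive error ε with success probability 2/3 requires k = Ω(1/ε²), even with unrestricted joint quantum measurements. -/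
/-!
A two-outcome measurement `{M, 1 - M}` distinguishes two pure states `u`, `v` with advantage at
most their trace distance `√(1 - c²)`, `c = Re ⟨u, v⟩`: the eigenvectors `w₁`, `w₂` of
`|v⟩⟨v| - |u⟩⟨u|` satisfy `⟨w₁, M w₁⟩ - ⟨w₂, M w₂⟩ = 2s(1 + s) (⟨v, M v⟩ - ⟨u, M u⟩)` with
`s = √(1 - c²)`, and `0 ≤ M ≤ 1` bounds the left side by `‖w₁‖² = 2s²(1 + s)`.
For `ψ₀^{⊗k}` and `ψ₁^{⊗k}` one has `c² = (1 - 4ε²)^k`, so an advantage of `1/3` forces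
`1/9 ≤ 1 - (1 - 4ε²)^k ≤ 4kε²` by Bernoulli's inequality.
-/

open scoped ComplexOrder

noncomputable section

/-- `|ψ⟩⟨ψ|^{⊗k}`, as a matrix indexed by `Fin k → Fin d`. -/
def ketbraPow (d k : ℕ) (φ : Cvec d) : Matrix (Fin k → Fin d) (Fin k → Fin d) ℂ :=
  fun i j => ∏ a : Fin k, φ (i a) * star (φ (j a))

/-- `ψ₀ = √(1/2−ε)·e₀ + √(1/2+ε)·e₁ ∈ ℂ²`. -/
def psi0 (ε : ℝ) : Cvec 2 :=
  (WithLp.equiv 2 (Fin 2 → ℂ)).symm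
    ![((Real.sqrt (1 / 2 - ε) : ℝ) : ℂ), ((Real.sqrt (1 / 2 + ε) : ℝ) : ℂ)]

/-- `ψ₁ = √(1/2+ε)·e₀ + √(1/2−ε)·e₁ ∈ ℂ²`. -/
def psi1 (ε : ℝ) : Cvec 2 :=
  (WithLp.equiv 2 (Fin 2 → ℂ)).symm
    ![((Real.sqrt (1 / 2 + ε) : ℝ) : ℂ), ((Real.sqrt (1 / 2 - ε) : ℝ) : ℂ)]

open Matrix

def tensorPow {d : ℕ} (k : ℕ) (φ : Cvec d) : (Fin k → Fin d) → ℂ :=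
  fun x => ∏ a, φ (x a)

lemma trace_mul_ketbraPow {d k : ℕ} (M : Matrix (Fin k → Fin d) (Fin k → Fin d) ℂ)
    (φ : Cvec d) :
    (M * ketbraPow d k φ).trace = star (tensorPow k φ) ⬝ᵥ (M *ᵥ tensorPow k φ) := by
  simp only [trace, diag, mul_apply, ketbraPow, tensorPow, dotProduct,
    mulVec, Pi.star_apply, Finset.mul_sum, Finset.prod_mul_distrib, star_prod]
  exact Finset.sum_congr rfl fun _ _ => Finset.sum_congr rfl fun _ _ => by ring

lemma star_tensorPow_dotProduct {d : ℕ} (k : ℕ) (φ χ : Cvec d) :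
    star (tensorPow k φ) ⬝ᵥ tensorPow k χ = inner ℂ φ χ ^ k := by
  simp only [PiLp.inner_apply, RCLike.inner_apply, Fintype.sum_pow, dotProduct, tensorPow,
    Pi.star_apply, star_prod, ← Finset.prod_mul_distrib]
  exact Finset.sum_congr rfl fun _ _ => Finset.prod_congr rfl fun _ _ => by
    rw [mul_comm]; rfl

section QuadraticForm

variable {ι : Type*} [Fintype ι]

lemma star_dotProduct_mulVec_sub_smul (M : Matrix ι ι ℂ) (u v : ι → ℂ) (a b : ℝ) :
    star ((a : ℂ) • v - (b : ℂ) • u) ⬝ᵥ (M *ᵥ ((a : ℂ) • v - (b : ℂ) • u))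
      = a ^ 2 * (star v ⬝ᵥ (M *ᵥ v)) + b ^ 2 * (star u ⬝ᵥ (M *ᵥ u))
        - a * b * (star u ⬝ᵥ (M *ᵥ v) + star v ⬝ᵥ (M *ᵥ u)) := by
  simp only [star_sub, star_smul, Complex.star_def, Complex.conj_ofReal, mulVec_sub,
    mulVec_smul, sub_dotProduct, dotProduct_sub, smul_dotProduct, dotProduct_smul, smul_eq_mul]
  ring

lemma star_dotProduct_mulVec_sub_smul_sub_swap (M : Matrix ι ι ℂ) (u v : ι → ℂ) (a b : ℝ) :
    star ((a : ℂ) • v - (b : ℂ) • u) ⬝ᵥ (M *ᵥ ((a : ℂ) • v - (b : ℂ) • u))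
      - star ((b : ℂ) • v - (a : ℂ) • u) ⬝ᵥ (M *ᵥ ((b : ℂ) • v - (a : ℂ) • u))
      = (a ^ 2 - b ^ 2) * (star v ⬝ᵥ (M *ᵥ v) - star u ⬝ᵥ (M *ᵥ u)) := by
  rw [star_dotProduct_mulVec_sub_smul, star_dotProduct_mulVec_sub_smul]
  ring

variable [DecidableEq ι]

lemma re_star_dotProduct_sub_smul {u v : ι → ℂ} (hu : star u ⬝ᵥ u = 1)
    (hv : star v ⬝ᵥ v = 1) (a b : ℝ) :
    (star ((a : ℂ) • v - (b : ℂ) • u) ⬝ᵥ ((a : ℂ) • v - (b : ℂ) • u)).re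
      = a ^ 2 + b ^ 2 - 2 * a * b * (star u ⬝ᵥ v).re := by
  have h := star_dotProduct_mulVec_sub_smul 1 u v a b
  simp only [one_mulVec] at h
  rw [hu, hv, star_dotProduct v u] at h
  rw [h]
  simp only [Complex.sub_re, Complex.add_re, Complex.re_ofReal_mul, Complex.star_def,
    Complex.conj_re, ← Complex.ofReal_pow, ← Complex.ofReal_mul, mul_one, Complex.ofReal_re]
  ring

theorem re_star_dotProduct_mulVec_sub_le_sqrt {M : Matrix ι ι ℂ} (hM : M.PosSemidef)
    (hM' : (1 - M).PosSemidef) {u v : ι → ℂ} (hu : star u ⬝ᵥ u = 1) (hv : star v ⬝ᵥ v = 1)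
    (hc : (star u ⬝ᵥ v).re ^ 2 < 1) :
    (star v ⬝ᵥ (M *ᵥ v) - star u ⬝ᵥ (M *ᵥ u)).re ≤ √(1 - (star u ⬝ᵥ v).re ^ 2) := by
  set c := (star u ⬝ᵥ v).re
  set s := √(1 - c ^ 2)
  have hs : 0 < s := Real.sqrt_pos.2 (by linarith)
  have hs2 : s ^ 2 = 1 - c ^ 2 := Real.sq_sqrt (by linarith)
  -- eigenvectors of `|v⟩⟨v| - |u⟩⟨u|` for the eigenvalues `s` and `-s`
  set w₁ := ((1 + s : ℝ) : ℂ) • v - (c : ℂ) • u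
  set w₂ := (c : ℂ) • v - ((1 + s : ℝ) : ℂ) • u
  have hplus : (star w₁ ⬝ᵥ (M *ᵥ w₁)).re ≤ 2 * (1 + s) * s ^ 2 := by
    have h := (Complex.nonneg_iff.mp (hM'.dotProduct_mulVec_nonneg w₁)).1
    rw [sub_mulVec, one_mulVec, dotProduct_sub, Complex.sub_re,
      re_star_dotProduct_sub_smul hu hv] at h
    nlinarith
  have hminus : 0 ≤ (star w₂ ⬝ᵥ (M *ᵥ w₂)).re :=
    (Complex.nonneg_iff.mp (hM.dotProduct_mulVec_nonneg w₂)).1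
  have hswap := congrArg Complex.re (star_dotProduct_mulVec_sub_smul_sub_swap M u v (1 + s) c)
  rw [Complex.sub_re, ← Complex.ofReal_pow, ← Complex.ofReal_pow, ← Complex.ofReal_sub,
    Complex.re_ofReal_mul] at hswap
  have : 0 < 2 * (1 + s) * s := by positivity
  nlinarith

end QuadraticForm

section States

variable {ε : ℝ}

lemma psi1_eq_psi0_neg : psi1 ε = psi0 (-ε) := by
  simp only [psi1, psi0, sub_neg_eq_add, ← sub_eq_add_neg]

lemma inner_psi0_self (hε : |ε| ≤ 1 / 2) : inner ℂ (psi0 ε) (psi0 ε) = 1 := by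
  obtain ⟨h₀, h₁⟩ := abs_le.mp hε
  simp only [psi0, PiLp.inner_apply, Fin.sum_univ_two, WithLp.equiv_symm_apply,
    cons_val_zero, cons_val_one, RCLike.inner_apply, Complex.conj_ofReal,
    ← Complex.ofReal_mul, Real.mul_self_sqrt (by linarith : 0 ≤ 1 / 2 - ε),
    Real.mul_self_sqrt (by linarith : 0 ≤ 1 / 2 + ε)]
  norm_num

lemma inner_psi1_self (hε : |ε| ≤ 1 / 2) : inner ℂ (psi1 ε) (psi1 ε) = 1 := by
  rw [psi1_eq_psi0_neg]
  exact inner_psi0_self (by rwa [abs_neg])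

lemma inner_psi0_psi1 (hε : |ε| ≤ 1 / 2) :
    inner ℂ (psi0 ε) (psi1 ε) = (√(1 - 4 * ε ^ 2) : ℝ) := by
  obtain ⟨h₀, h₁⟩ := abs_le.mp hε
  simp only [psi0, psi1, PiLp.inner_apply, Fin.sum_univ_two, WithLp.equiv_symm_apply,
    cons_val_zero, cons_val_one, RCLike.inner_apply, Complex.conj_ofReal,
    ← Complex.ofReal_mul, ← Complex.ofReal_add, Complex.ofReal_inj]
  rw [mul_comm √(1 / 2 - ε), ← Real.sqrt_mul (show 0 ≤ 1 / 2 + ε by linarith),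
    show 1 - 4 * ε ^ 2 = 2 ^ 2 * ((1 / 2 + ε) * (1 / 2 - ε)) by ring,
    Real.sqrt_mul (show (0 : ℝ) ≤ 2 ^ 2 by norm_num), Real.sqrt_sq zero_le_two]
  ring

end States

/-- Optimality of the SWAP test: any two-outcome POVM `{M, I−M}` on
`(ℂ²)^{⊗k}` distinguishing `ψ₁^{⊗k}` from `ψ₀^{⊗k}` with advantage `≥ 1/3` requires
`k ≥ 1/(36 ε²)`. -/
theorem stmt9 (ε : ℝ) (hε : 0 < ε) (hε' : ε ≤ 1 / 2) (k : ℕ) (hk : 1 ≤ k)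
    (M : Matrix (Fin k → Fin 2) (Fin k → Fin 2) ℂ)
    (hM : M.PosSemidef) (hM' : ((1 : Matrix (Fin k → Fin 2) (Fin k → Fin 2) ℂ) - M).PosSemidef)
    (hgap : Complex.re ((M * ketbraPow 2 k (psi1 ε)).trace
        - (M * ketbraPow 2 k (psi0 ε)).trace) ≥ 1 / 3) :
    (k : ℝ) ≥ 1 / (36 * ε ^ 2) := by
  have hε₂ : |ε| ≤ 1 / 2 := abs_le.mpr ⟨by linarith, hε'⟩
  have hoverlap : (star (tensorPow k (psi0 ε)) ⬝ᵥ tensorPow k (psi1 ε)).re ^ 2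
      = (1 - 4 * ε ^ 2) ^ k := by
    rw [star_tensorPow_dotProduct, inner_psi0_psi1 hε₂, ← Complex.ofReal_pow, Complex.ofReal_re,
      ← pow_mul, mul_comm k 2, pow_mul, Real.sq_sqrt (by nlinarith)]
  have hfid : (1 - 4 * ε ^ 2) ^ k < 1 := pow_lt_one₀ (by nlinarith) (by nlinarith) (by omega)
  have hadv := re_star_dotProduct_mulVec_sub_le_sqrt hM hM'
    (by rw [star_tensorPow_dotProduct, inner_psi0_self hε₂, one_pow])
    (by rw [star_tensorPow_dotProduct, inner_psi1_self hε₂, one_pow]) (hoverlap ▸ hfid)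
  rw [hoverlap, ← trace_mul_ketbraPow, ← trace_mul_ketbraPow] at hadv
  have hsq : (1 / 3) ^ 2 ≤ 1 - (1 - 4 * ε ^ 2) ^ k :=
    (Real.le_sqrt (by norm_num) (by linarith)).mp (hgap.le.trans hadv)
  have hbernoulli := one_add_mul_le_pow (a := -(4 * ε ^ 2)) (by nlinarith) k
  rw [← sub_eq_add_neg] at hbernoulli
  rw [ge_iff_le, div_le_iff₀ (by positivity)]
  nlinarith
end
end

section
/- Let d ≥ 1, k ≥ 1, ε ∈ (0,1), and let φ ∈ ℂ^d be a unit vector. For θ ∈ ℝ define the d×d matrix M(θ) = (1−ε)·|e₀⟩⟨e₀| + √(ε(1−ε))·e^{iθ}·|e₀⟩⟨φ| + √(ε(1−ε))·e^{−iθ}·|φ⟩⟨e₀| + ε·|φ⟩⟨φ|, where e₀ is the first standard basis vector. Then (2π)^{-1} ∫₀^{2π} M(θ)^{⊗k} dθ = Σ_{t=0}^{k} ε^t (1−ε)^{k−t} C(k,t)² · P_sym^{d,k} (|e₀⟩⟨e₀|^{⊗(k−t)} ⊗ |φ⟩⟨φ|^{⊗t}) P_sym^{d,k}, as matrices indexed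 by (Fin k → Fin d), where the factor |e₀⟩⟨e₀|^{⊗(k−t)} acts on the first k−t tensor factors. -/
noncomputable section

/-- The permutation operator `P_d(π)` on `(ℂ^d)^{⊗k}`. -/
def permMat (d k : ℕ) (π : Equiv.Perm (Fin k)) : Matrix (Fin k → Fin d) (Fin k → Fin d) ℂ :=
  fun i j => if i = j ∘ π then 1 else 0

/-- The projector `P_sym^{d,k} = (k!)⁻¹ Σ_{π ∈ S_k} P_d(π)` onto the symmetric subspace. -/
def PsymM (d k : ℕ) : Matrix (Fin k → Fin d) (Fin k → Fin d) ℂ :=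
  ((k.factorial : ℂ))⁻¹ • ∑ π : Equiv.Perm (Fin k), permMat d k π

/-- The `k`-fold Kronecker power of a `d×d` matrix. -/
def kronPow (d m : ℕ) (Q : Matrix (Fin d) (Fin d) ℂ) :
    Matrix (Fin m → Fin d) (Fin m → Fin d) ℂ :=
  fun i j => ∏ a : Fin m, Q (i a) (j a)

/-- The first standard basis vector `e₀` of `ℂ^d` (as a coordinate function). -/
def e0vec (d : ℕ) : Fin d → ℂ := fun i => if (i : ℕ) = 0 then 1 else 0

/-- `|x⟩⟨y|` as a `d×d` matrix, for coordinate functions `x, y`. -/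
def ketbraF (d : ℕ) (x y : Fin d → ℂ) : Matrix (Fin d) (Fin d) ℂ :=
  fun i j => x i * star (y j)

/-- `M(θ) = (1−ε)|e₀⟩⟨e₀| + √(ε(1−ε))e^{iθ}|e₀⟩⟨φ| + √(ε(1−ε))e^{−iθ}|φ⟩⟨e₀| + ε|φ⟩⟨φ|`. -/
def Mtheta (d : ℕ) (ε : ℝ) (φ : Cvec d) (θ : ℝ) : Matrix (Fin d) (Fin d) ℂ :=
  ((1 - ε : ℝ) : ℂ) • ketbraF d (e0vec d) (e0vec d)
    + (((Real.sqrt (ε * (1 - ε)) : ℝ) : ℂ) * Complex.exp (θ * Complex.I)) •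
        ketbraF d (e0vec d) (fun i => φ i)
    + (((Real.sqrt (ε * (1 - ε)) : ℝ) : ℂ) * Complex.exp (-θ * Complex.I)) •
        ketbraF d (fun i => φ i) (e0vec d)
    + ((ε : ℝ) : ℂ) • ketbraF d (fun i => φ i) (fun i => φ i)

/-- `|e₀⟩⟨e₀|^{⊗(k−t)} ⊗ |φ⟩⟨φ|^{⊗t}` on `(ℂ^d)^{⊗k}`, with `|e₀⟩⟨e₀|` acting on the
first `k−t` tensor factors. -/
def mixedBlock (d k t : ℕ) (φ : Cvec d) : Matrix (Fin k → Fin d) (Fin k → Fin d) ℂ :=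
  fun i j => ∏ a : Fin k,
    (if (a : ℕ) < k - t then e0vec d (i a) * star (e0vec d (j a))
     else φ (i a) * star (φ (j a)))

/-
`M(θ)` is the rank-one projector onto `u_θ = √(1-ε) e₀ + √ε e^{-iθ} φ`, so `M(θ)^{⊗k}` is the
projector onto `u_θ^{⊗k}`. Expanding the tensor power by the number `t` of factors equal to `φ`
gives `u_θ^{⊗k} = Σ_t √((1-ε)^{k-t} ε^t) e^{-itθ} D_t`, where `D_t` sums the `C(k,t)` product
vectors with `φ` in `t` slots and `e₀` elsewhere. Averaging over `θ` kills the cross terms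
`t ≠ s` (Parseval), leaving `Σ_t (1-ε)^{k-t} ε^t |D_t⟩⟨D_t|`. Finally
`D_t = C(k,t) P_sym (e₀^{⊗(k-t)} ⊗ φ^{⊗t})`: slot permutations act transitively on the patterns
with `t` copies of `φ` and are absorbed by `P_sym`, while `D_t` is itself symmetric.
-/

namespace PhaseAverage

open Finset Matrix Complex ComplexConjugate

variable {d k : ℕ}

def tensorVec (v : Fin k → Fin d → ℂ) : (Fin k → Fin d) → ℂ := fun i => ∏ a, v a (i a)

def patternVec (x y : Fin d → ℂ) (s : Finset (Fin k)) : (Fin k → Fin d) → ℂ :=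
  tensorVec fun a => if a ∈ s then y else x

def dickeVec (k t : ℕ) (x y : Fin d → ℂ) : (Fin k → Fin d) → ℂ :=
  ∑ s ∈ powersetCard t univ, patternVec x y s

lemma kronPow_vecMulVec (x y : Fin d → ℂ) :
    kronPow d k (vecMulVec x (star y)) =
      vecMulVec (tensorVec fun _ => x) (star (tensorVec fun _ => y)) := by
  ext i j
  simp [kronPow, tensorVec, vecMulVec_apply, prod_mul_distrib, star_prod]

lemma patternVec_apply (x y : Fin d → ℂ) (s : Finset (Fin k)) (i : Fin k → Fin d) :
    patternVec x y s i = (∏ a ∈ s, y (i a)) * ∏ a ∈ sᶜ, x (i a) := by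
  rw [patternVec, tensorVec, ← prod_mul_prod_compl s]
  congr 1 <;> exact prod_congr rfl fun a ha => by simp_all

lemma tensorVec_const_add (α β : ℂ) (x y : Fin d → ℂ) :
    tensorVec (fun _ : Fin k => α • x + β • y)
      = ∑ t ∈ range (k + 1), (α ^ (k - t) * β ^ t) • dickeVec k t x y := by
  ext i
  have hpattern : ∀ s : Finset (Fin k), (∏ a ∈ s, β * y (i a)) * ∏ a ∈ sᶜ, α * x (i a)
      = (α ^ (k - #s) * β ^ #s) * patternVec x y s i := by
    intro s
    simp only [patternVec_apply, prod_mul_distrib, prod_const, card_compl, Fintype.card_fin]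
    ring
  simp only [tensorVec, Pi.add_apply, Pi.smul_apply, smul_eq_mul]
  simp_rw [add_comm (α * _), prod_add, ← compl_eq_univ_sdiff, hpattern]
  rw [← sum_fiberwise_of_maps_to (g := card) (t := range (k + 1))
    fun s _ => mem_range_succ_iff.2 (card_le_univ s |>.trans_eq (Fintype.card_fin k))]
  simp only [dickeVec, Finset.sum_apply, Pi.smul_apply, smul_eq_mul, mul_sum,
    powersetCard_eq_filter]
  exact sum_congr rfl fun t _ => sum_congr rfl fun s hs => by rw [(mem_filter.1 hs).2]

lemma permMat_eq_permMatrix (π : Equiv.Perm (Fin k)) :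
    permMat d k π = Equiv.Perm.permMatrix ℂ (π.arrowCongr (Equiv.refl (Fin d))) := by
  ext i j
  simp only [permMat, Equiv.Perm.permMatrix, PEquiv.toMatrix_apply, Equiv.toPEquiv_apply,
    Option.mem_def, Option.some.injEq]
  exact if_congr (Equiv.comp_symm_eq π j i).symm rfl rfl

lemma permMat_mul_permMat (π σ : Equiv.Perm (Fin k)) :
    permMat d k σ * permMat d k π = permMat d k (π * σ) := by
  simp only [permMat_eq_permMatrix, ← Matrix.permMatrix_mul]
  rfl

lemma conjTranspose_permMat (π : Equiv.Perm (Fin k)) :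
    (permMat d k π)ᴴ = permMat d k π⁻¹ := by
  simp only [permMat_eq_permMatrix, conjTranspose_permMatrix]
  rfl

lemma permMat_mulVec (π : Equiv.Perm (Fin k)) (f : (Fin k → Fin d) → ℂ) :
    permMat d k π *ᵥ f = fun i => f (i ∘ π.symm) := by
  rw [permMat_eq_permMatrix, permMatrix_mulVec]
  rfl

lemma permMat_mulVec_tensorVec (π : Equiv.Perm (Fin k)) (v : Fin k → Fin d → ℂ) :
    permMat d k π *ᵥ tensorVec v = tensorVec (v ∘ π) := by
  ext i
  rw [permMat_mulVec]
  exact (Equiv.prod_comp π fun a => v a (i (π.symm a))).symm.trans (by simp [tensorVec])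

lemma permMat_mulVec_patternVec (π : Equiv.Perm (Fin k)) (x y : Fin d → ℂ)
    (s : Finset (Fin k)) :
    permMat d k π *ᵥ patternVec x y (s.map π.toEmbedding) = patternVec x y s := by
  rw [patternVec, permMat_mulVec_tensorVec]
  congr 1
  ext a : 1
  simp

lemma permMat_mulVec_dickeVec (π : Equiv.Perm (Fin k)) (t : ℕ) (x y : Fin d → ℂ) :
    permMat d k π *ᵥ dickeVec k t x y = dickeVec k t x y := by
  have hreindex : powersetCard t univ
      = (powersetCard t univ).map (mapEmbedding π.toEmbedding).toEmbedding := by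
    rw [← powersetCard_map, map_univ_equiv]
  rw [dickeVec, mulVec_sum]
  conv_lhs => rw [hreindex]
  simp only [sum_map, RelEmbedding.coe_toEmbedding, mapEmbedding_apply, permMat_mulVec_patternVec]

lemma PsymM_mul_permMat (π : Equiv.Perm (Fin k)) : PsymM d k * permMat d k π = PsymM d k := by
  rw [PsymM, smul_mul, sum_mul]
  simp_rw [permMat_mul_permMat]
  exact congrArg _ (Fintype.sum_equiv (Equiv.mulLeft π) _ _ fun _ => rfl)

lemma conjTranspose_PsymM : (PsymM d k)ᴴ = PsymM d k := by
  rw [PsymM, conjTranspose_smul, conjTranspose_sum, star_inv₀, star_natCast]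
  simp_rw [conjTranspose_permMat]
  exact congrArg _ (Fintype.sum_equiv (Equiv.inv _) _ _ fun _ => rfl)

lemma PsymM_mulVec_dickeVec (t : ℕ) (x y : Fin d → ℂ) :
    PsymM d k *ᵥ dickeVec k t x y = dickeVec k t x y := by
  simp only [PsymM, smul_mulVec, sum_mulVec, permMat_mulVec_dickeVec, sum_const, card_univ,
    Fintype.card_perm, Fintype.card_fin]
  rw [← Nat.cast_smul_eq_nsmul ℂ, smul_smul,
    inv_mul_cancel₀ (Nat.cast_ne_zero.2 k.factorial_ne_zero), one_smul]

lemma PsymM_mulVec_patternVec_of_card_eq (x y : Fin d → ℂ) {s s' : Finset (Fin k)}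
    (h : #s = #s') : PsymM d k *ᵥ patternVec x y s = PsymM d k *ᵥ patternVec x y s' := by
  obtain ⟨π, hπ⟩ := Equiv.Perm.exists_map_finset_eq s' s h.symm
  rw [← hπ, ← permMat_mulVec_patternVec π x y s', mulVec_mulVec, PsymM_mul_permMat]

lemma dickeVec_eq_choose_smul_PsymM_mulVec (x y : Fin d → ℂ) {s : Finset (Fin k)} :
    dickeVec k #s x y = (k.choose #s : ℂ) • (PsymM d k *ᵥ patternVec x y s) := by
  rw [← PsymM_mulVec_dickeVec, dickeVec, mulVec_sum,
    sum_congr rfl fun s' hs' => PsymM_mulVec_patternVec_of_card_eq x y (mem_powersetCard.1 hs').2,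
    sum_const, card_powersetCard, card_univ, Fintype.card_fin, Nat.cast_smul_eq_nsmul]

lemma PsymM_mul_vecMulVec_mul_PsymM (v : (Fin k → Fin d) → ℂ) :
    PsymM d k * vecMulVec v (star v) * PsymM d k
      = vecMulVec (PsymM d k *ᵥ v) (star (PsymM d k *ᵥ v)) := by
  conv_rhs => rw [star_mulVec, conjTranspose_PsymM]
  rw [mul_vecMulVec, vecMulVec_mul]

lemma choose_sq_smul_PsymM_mul_vecMulVec_mul_PsymM (x y : Fin d → ℂ) {s : Finset (Fin k)}
    {t : ℕ} (hs : #s = t) :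
    (k.choose t : ℂ) ^ 2 • (PsymM d k * vecMulVec (patternVec x y s) (star (patternVec x y s))
      * PsymM d k) = vecMulVec (dickeVec k t x y) (star (dickeVec k t x y)) := by
  subst hs
  rw [PsymM_mul_vecMulVec_mul_PsymM, dickeVec_eq_choose_smul_PsymM_mulVec]
  ext i j
  simp only [Matrix.smul_apply, vecMulVec_apply, Pi.star_apply, Pi.smul_apply, smul_eq_mul,
    star_mul', star_natCast]
  ring

lemma card_filter_sub_le_val {t : ℕ} (ht : t ≤ k) : #{a : Fin k | k - t ≤ (a : ℕ)} = t := by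
  have hsplit := card_filter_add_card_filter_not (s := univ) (p := fun a : Fin k => (a : ℕ) < k - t)
  simp only [Fin.card_filter_val_lt, not_lt, card_univ, Fintype.card_fin] at hsplit
  omega

lemma mixedBlock_eq_vecMulVec (t : ℕ) (φ : Cvec d) :
    mixedBlock d k t φ = vecMulVec (patternVec (e0vec d) (fun i => φ i) {a | k - t ≤ (a : ℕ)})
      (star (patternVec (e0vec d) (fun i => φ i) {a | k - t ≤ (a : ℕ)})) := by
  ext i j
  simp only [mixedBlock, vecMulVec_apply, patternVec, tensorVec, Pi.star_apply, star_prod,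
    ← prod_mul_distrib]
  refine prod_congr rfl fun a _ => ?_
  simp only [mem_filter, mem_univ, true_and]
  split_ifs <;> first | rfl | omega

lemma choose_sq_smul_PsymM_mul_mixedBlock_mul_PsymM {t : ℕ} (ht : t ≤ k) (φ : Cvec d) :
    (k.choose t : ℂ) ^ 2 • (PsymM d k * mixedBlock d k t φ * PsymM d k)
      = vecMulVec (dickeVec k t (e0vec d) (fun i => φ i))
          (star (dickeVec k t (e0vec d) (fun i => φ i))) := by
  rw [mixedBlock_eq_vecMulVec]
  exact choose_sq_smul_PsymM_mul_vecMulVec_mul_PsymM _ _ (card_filter_sub_le_val ht)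

lemma phaseAverage_exp_int_mul (n : ℤ) :
    (((2 * Real.pi)⁻¹ : ℝ) : ℂ) * ∫ θ in (0 : ℝ)..2 * Real.pi, exp (n * θ * I)
      = if n = 0 then 1 else 0 := by
  rcases eq_or_ne n 0 with rfl | hn
  · rw [if_pos rfl, Int.cast_zero]
    simp only [zero_mul, exp_zero, intervalIntegral.integral_const, sub_zero, real_smul, mul_one]
    rw [← ofReal_mul, inv_mul_cancel₀ Real.two_pi_pos.ne', ofReal_one]
  · have hc : (n : ℂ) * I ≠ 0 := mul_ne_zero (Int.cast_ne_zero.2 hn) I_ne_zero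
    simp_rw [mul_right_comm _ _ I, if_neg hn]
    rw [integral_exp_mul_complex hc, ofReal_zero, mul_zero, exp_zero,
      show (n : ℂ) * I * ((2 * Real.pi : ℝ) : ℂ) = n * (2 * Real.pi * I) by push_cast; ring,
      exp_int_mul_two_pi_mul_I, sub_self, zero_div, mul_zero]

lemma phaseAverage_sum_mul_star_sum (n : ℕ) (a b : ℕ → ℂ) :
    (((2 * Real.pi)⁻¹ : ℝ) : ℂ) * ∫ θ in (0 : ℝ)..2 * Real.pi,
      (∑ t ∈ range n, a t * exp (-θ * I) ^ t) * star (∑ t ∈ range n, b t * exp (-θ * I) ^ t)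
      = ∑ t ∈ range n, a t * star (b t) := by
  have hexpand : ∀ θ : ℝ, (∑ t ∈ range n, a t * exp (-θ * I) ^ t) *
      star (∑ t ∈ range n, b t * exp (-θ * I) ^ t)
        = ∑ t ∈ range n, ∑ s ∈ range n, a t * star (b s) * exp (((s - t : ℤ) : ℂ) * θ * I) := by
    intro θ
    rw [star_sum, sum_mul_sum]
    refine sum_congr rfl fun t _ => sum_congr rfl fun s _ => ?_
    rw [star_mul', star_pow, Complex.star_def, ← exp_conj, ← exp_nat_mul, ← exp_nat_mul]
    simp only [map_mul, map_neg, conj_ofReal, conj_I]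
    rw [mul_mul_mul_comm, ← exp_add]
    congr 2
    push_cast
    ring
  simp_rw [hexpand]
  rw [intervalIntegral.integral_finsetSum fun t _ =>
    (by fun_prop : Continuous _).intervalIntegrable _ _, mul_sum]
  refine sum_congr rfl fun t ht => ?_
  rw [intervalIntegral.integral_finsetSum fun s _ =>
    (by fun_prop : Continuous _).intervalIntegrable _ _, mul_sum]
  simp_rw [intervalIntegral.integral_const_mul, mul_left_comm (((2 * Real.pi)⁻¹ : ℝ) : ℂ),
    phaseAverage_exp_int_mul, sub_eq_zero, Nat.cast_inj, mul_ite, mul_zero, mul_one]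
  rw [sum_ite_eq' _ _ (fun s => a t * star (b s)), if_pos ht]

lemma Mtheta_eq_vecMulVec {ε : ℝ} (hε : ε ∈ Set.Icc 0 1) (φ : Cvec d) (θ : ℝ) :
    Mtheta d ε φ θ =
      vecMulVec ((√(1 - ε) : ℂ) • e0vec d + ((√ε : ℂ) * exp (-θ * I)) • fun i => φ i)
        (star ((√(1 - ε) : ℂ) • e0vec d + ((√ε : ℂ) * exp (-θ * I)) • fun i => φ i)) := by
  have hsqrt : √(ε * (1 - ε)) = √ε * √(1 - ε) := Real.sqrt_mul hε.1 _
  have hsqε : ((√ε * √ε : ℝ) : ℂ) = ε := by rw [Real.mul_self_sqrt hε.1]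
  have hsq1ε : ((√(1 - ε) * √(1 - ε) : ℝ) : ℂ) = 1 - ε := by
    rw [Real.mul_self_sqrt (sub_nonneg.2 hε.2)]; push_cast; ring
  have hphase : exp (-θ * I) * exp (θ * I) = 1 := by
    rw [← exp_add, neg_mul, neg_add_cancel, exp_zero]
  have hconj : star (exp (-θ * I)) = exp (θ * I) := by
    rw [Complex.star_def, ← exp_conj]; simp
  ext i j
  simp only [Mtheta, ketbraF, hsqrt, Matrix.add_apply, Matrix.smul_apply, vecMulVec_apply,
    Pi.star_apply, Pi.add_apply, Pi.smul_apply, smul_eq_mul, star_add, star_mul', hconj,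
    Complex.star_def, conj_ofReal]
  push_cast at hsqε hsq1ε ⊢
  linear_combination (-(φ i * conj (φ j))) * hsqε - (e0vec d i * conj (e0vec d j)) * hsq1ε
    - ((√ε : ℂ) * √ε * φ i * conj (φ j)) * hphase

lemma kronPow_Mtheta_apply {ε : ℝ} (hε : ε ∈ Set.Icc 0 1) (φ : Cvec d) (θ : ℝ)
    (i j : Fin k → Fin d) :
    kronPow d k (Mtheta d ε φ θ) i j
      = (∑ t ∈ range (k + 1), ((√(1 - ε) ^ (k - t) * √ε ^ t : ℝ) : ℂ) *
            dickeVec k t (e0vec d) (fun i => φ i) i * exp (-θ * I) ^ t) *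
        star (∑ t ∈ range (k + 1), ((√(1 - ε) ^ (k - t) * √ε ^ t : ℝ) : ℂ) *
            dickeVec k t (e0vec d) (fun i => φ i) j * exp (-θ * I) ^ t) := by
  rw [Mtheta_eq_vecMulVec hε, kronPow_vecMulVec, tensorVec_const_add, vecMulVec_apply,
    Pi.star_apply]
  simp only [Finset.sum_apply, Pi.smul_apply, smul_eq_mul, mul_pow]
  congr 1
  · exact sum_congr rfl fun t _ => by push_cast; ring
  · exact congrArg star (sum_congr rfl fun t _ => by push_cast; ring)

lemma phaseAverage_kronPow_Mtheta {ε : ℝ} (hε : ε ∈ Set.Icc 0 1) (φ : Cvec d) :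
    ((fun i j => (((2 * Real.pi)⁻¹ : ℝ) : ℂ) *
        ∫ θ in (0 : ℝ)..(2 * Real.pi), kronPow d k (Mtheta d ε φ θ) i j) :
      Matrix (Fin k → Fin d) (Fin k → Fin d) ℂ)
      = ∑ t ∈ range (k + 1), ((ε ^ t * (1 - ε) ^ (k - t) : ℝ) : ℂ) •
          vecMulVec (dickeVec k t (e0vec d) fun i => φ i)
            (star (dickeVec k t (e0vec d) fun i => φ i)) := by
  ext i j
  simp only [kronPow_Mtheta_apply hε]
  rw [phaseAverage_sum_mul_star_sum, Matrix.sum_apply]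
  refine sum_congr rfl fun t _ => ?_
  rw [Matrix.smul_apply, vecMulVec_apply, Pi.star_apply, star_mul', smul_eq_mul,
    Complex.star_def, conj_ofReal]
  have hweight : (√(1 - ε) ^ (k - t) * √ε ^ t) * (√(1 - ε) ^ (k - t) * √ε ^ t)
      = ε ^ t * (1 - ε) ^ (k - t) := by
    rw [mul_mul_mul_comm, ← mul_pow, ← mul_pow, Real.mul_self_sqrt hε.1,
      Real.mul_self_sqrt (sub_nonneg.2 hε.2), mul_comm]
  rw [← hweight]
  push_cast
  ring

end PhaseAverage

theorem stmt10_general (d k : ℕ) (ε : ℝ) (hε : ε ∈ Set.Ioo (0 : ℝ) 1)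
    (φ : Cvec d) :
    ((fun i j => (((2 * Real.pi)⁻¹ : ℝ) : ℂ) *
        ∫ θ in (0 : ℝ)..(2 * Real.pi), kronPow d k (Mtheta d ε φ θ) i j) :
      Matrix (Fin k → Fin d) (Fin k → Fin d) ℂ)
      = ∑ t ∈ Finset.range (k + 1),
          ((ε ^ t * (1 - ε) ^ (k - t) * (Nat.choose k t : ℝ) ^ 2 : ℝ) : ℂ) •
            (PsymM d k * mixedBlock d k t φ * PsymM d k) := by
  rw [PhaseAverage.phaseAverage_kronPow_Mtheta (Set.Ioo_subset_Icc_self hε)]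
  refine Finset.sum_congr rfl fun t ht => ?_
  rw [← PhaseAverage.choose_sq_smul_PsymM_mul_mixedBlock_mul_PsymM (Finset.mem_range_succ_iff.1 ht),
    smul_smul]
  congr 1
  push_cast
  ring

/-- Averaging the `k`-fold tensor power of `M(θ)` over a uniform phase:
`(2π)⁻¹ ∫₀^{2π} M(θ)^{⊗k} dθ
  = Σ_{t=0}^k ε^t (1−ε)^{k−t} C(k,t)² · P_sym (|e₀⟩⟨e₀|^{⊗(k−t)} ⊗ |φ⟩⟨φ|^{⊗t}) P_sym`. -/
theorem stmt10 (d k : ℕ) (hd : 1 ≤ d) (hk : 1 ≤ k) (ε : ℝ) (hε : ε ∈ Set.Ioo (0 : ℝ) 1)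
    (φ : Cvec d) (hφ : ‖φ‖ = 1) :
    ((fun i j => (((2 * Real.pi)⁻¹ : ℝ) : ℂ) *
        ∫ θ in (0 : ℝ)..(2 * Real.pi), kronPow d k (Mtheta d ε φ θ) i j) :
      Matrix (Fin k → Fin d) (Fin k → Fin d) ℂ)
      = ∑ t ∈ Finset.range (k + 1),
          ((ε ^ t * (1 - ε) ^ (k - t) * (Nat.choose k t : ℝ) ^ 2 : ℝ) : ℂ) •
            (PsymM d k * mixedBlock d k t φ * PsymM d k) :=
  stmt10_general d k ε hε φ

end
end

section
/- Let d ≥ 1, k ≥ 1, 0 ≤ t ≤ k, and let φ, φ' ∈ ℂ^{d+1} be unit vectors with ⟨e₀, φ⟩ = ⟨e₀, φ'⟩ = 0, where e₀ is the first standard basis vector. Define the vector φ_t in the k-fold tensor power (as a function (Fin k → Fin (d+1)) → ℂ) by φ_t = C(k,t)^{-1/2} · Σ_{S ⊆ Fin k, |S| = t} ⊗_{a<k} (if a ∈ S then φ else e₀), i.e., φ_t(i) = C(k,t)^{-1/2} · Σ_{S, |S|=t} ∏_{a∈S} φ(i a) · ∏_{a∉S} e₀(i a), and define φ'_t analogously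 from φ'. Then ⟨φ'_t, φ_t⟩ = ⟨φ', φ⟩^t; in particular φ_t is a unit vector and the map φ^{⊗t} ⊗ e₀^{⊗(k−t)} ↦ φ_t preserves inner products. -/
/-!
Expanding by sesquilinearity, `⟨φ'_t, φ_t⟩` is `C(k,t)⁻¹` times a double sum over `t`-subsets
`S', S` of inner products of pure tensors, each the product of the slotwise inner products.
If `S' ≠ S`, equal cardinality gives a slot in `S' \ S`, contributing `⟨φ', e₀⟩ = 0`; the
`C(k,t)` diagonal terms are `⟨φ', φ⟩^t ⟨e₀, e₀⟩^(k-t) = ⟨φ', φ⟩^t`.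
-/

noncomputable section

/-- `φ_t = C(k,t)^{-1/2} Σ_{S ⊆ [k], |S| = t} ⊗_{a<k} (if a ∈ S then φ else e₀)`, as a
vector in `(ℂ^{d+1})^{⊗k}` realized as a function `(Fin k → Fin (d+1)) → ℂ`. -/
def phiT (d k t : ℕ) (φ : Cvec (d + 1)) : (Fin k → Fin (d + 1)) → ℂ :=
  fun i => (((Real.sqrt (Nat.choose k t) : ℝ) : ℂ))⁻¹ *
    ∑ S ∈ Finset.powersetCard t (Finset.univ : Finset (Fin k)),
      ∏ a : Fin k, (if a ∈ S then φ (i a) else e0vec (d + 1) (i a))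

/-- The inner product on `(ℂ^{d+1})^{⊗k}` realized as functions, conjugate-linear in the
first argument. -/
def tensorInner (d k : ℕ) (x y : (Fin k → Fin (d + 1)) → ℂ) : ℂ :=
  ∑ i : Fin k → Fin (d + 1), star (x i) * y i

open Finset
open scoped InnerProductSpace

section PureTensor

variable {κ ι : Type*} [Fintype κ] [DecidableEq κ] [Fintype ι]

def pureTensor (u : κ → EuclideanSpace ℂ ι) : EuclideanSpace ℂ (κ → ι) :=
  WithLp.toLp 2 fun i => ∏ a, u a (i a)

theorem inner_pureTensor (u v : κ → EuclideanSpace ℂ ι) :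
    ⟪pureTensor u, pureTensor v⟫_ℂ = ∏ a, ⟪u a, v a⟫_ℂ := by
  simp only [pureTensor, PiLp.inner_apply, RCLike.inner_apply, map_prod, ← prod_mul_distrib]
  rw [prod_univ_sum, Fintype.piFinset_univ]

end PureTensor

theorem tensorInner_eq_inner (d k : ℕ) (x y : (Fin k → Fin (d + 1)) → ℂ) :
    tensorInner d k x y = ⟪WithLp.toLp 2 x, WithLp.toLp 2 y⟫_ℂ := by
  simp [tensorInner, PiLp.inner_apply, mul_comm]

theorem e0vec_eq_single (d : ℕ) :
    e0vec (d + 1) = ⇑(EuclideanSpace.single (0 : Fin (d + 1)) (1 : ℂ)) := by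
  funext j
  simp only [e0vec, PiLp.single_apply, Fin.val_eq_zero_iff]

section Slots

variable {d k : ℕ}

def slotVectors (φ : Cvec (d + 1)) (S : Finset (Fin k)) : Fin k → Cvec (d + 1) :=
  fun a => if a ∈ S then φ else EuclideanSpace.single 0 1

theorem toLp_phiT (t : ℕ) (φ : Cvec (d + 1)) :
    WithLp.toLp 2 (phiT d k t φ) = ((√(k.choose t) : ℝ) : ℂ)⁻¹ •
      ∑ S ∈ powersetCard t univ, pureTensor (slotVectors φ S) := by
  ext i
  simp only [phiT, e0vec_eq_single, PiLp.smul_apply, WithLp.ofLp_sum, Finset.sum_apply,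
    pureTensor, slotVectors, apply_ite (fun v : Cvec (d + 1) => v (i _)), smul_eq_mul]

theorem inner_pureTensor_slotVectors_self (φ φ' : Cvec (d + 1)) (S : Finset (Fin k)) :
    ⟪pureTensor (slotVectors φ' S), pureTensor (slotVectors φ S)⟫_ℂ =
      ⟪φ', φ⟫_ℂ ^ S.card := by
  rw [inner_pureTensor]
  calc ∏ a, ⟪slotVectors φ' S a, slotVectors φ S a⟫_ℂ
        = ∏ a, if a ∈ S then ⟪φ', φ⟫_ℂ else 1 := by
        refine prod_congr rfl fun a _ => ?_
        by_cases ha : a ∈ S <;> simp [slotVectors, ha]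
    _ = ⟪φ', φ⟫_ℂ ^ S.card := by rw [prod_ite_mem, univ_inter, prod_const]

theorem inner_pureTensor_slotVectors_of_not_subset {φ φ' : Cvec (d + 1)}
    (hφ'0 : ⟪EuclideanSpace.single 0 1, φ'⟫_ℂ = 0) {S' S : Finset (Fin k)}
    (h : ¬S' ⊆ S) :
    ⟪pureTensor (slotVectors φ' S'), pureTensor (slotVectors φ S)⟫_ℂ = 0 := by
  obtain ⟨a, haS', haS⟩ := not_subset.mp h
  rw [inner_pureTensor]
  refine prod_eq_zero (mem_univ a) ?_
  rw [slotVectors, slotVectors, if_pos haS', if_neg haS, ← inner_conj_symm, hφ'0, map_zero]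

end Slots

theorem tensorInner_phiT {d k t : ℕ} (ht : t ≤ k) {φ φ' : Cvec (d + 1)}
    (hφ'0 : ⟪EuclideanSpace.single 0 1, φ'⟫_ℂ = 0) :
    tensorInner d k (phiT d k t φ') (phiT d k t φ) = ⟪φ', φ⟫_ℂ ^ t := by
  have hchoose : (0 : ℝ) < k.choose t := mod_cast Nat.choose_pos ht
  have hdiag : ∀ S' ∈ powersetCard t (univ : Finset (Fin k)),
      ∑ S ∈ powersetCard t univ,
        ⟪pureTensor (slotVectors φ' S'), pureTensor (slotVectors φ S)⟫_ℂ =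
          ⟪φ', φ⟫_ℂ ^ t := by
    intro S' hS'
    rw [mem_powersetCard_univ] at hS'
    rw [sum_eq_single_of_mem S' (mem_powersetCard_univ.mpr hS'),
      inner_pureTensor_slotVectors_self, hS']
    intro S hS hne
    rw [mem_powersetCard_univ] at hS
    refine inner_pureTensor_slotVectors_of_not_subset hφ'0 fun hsub => hne ?_
    exact (eq_of_subset_of_card_le hsub (hS.trans hS'.symm).le).symm
  rw [tensorInner_eq_inner, toLp_phiT, toLp_phiT, inner_smul_left, inner_smul_right, sum_inner]
  simp_rw [inner_sum]
  rw [sum_congr rfl hdiag, sum_const, card_powersetCard, card_univ, Fintype.card_fin]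
  rw [nsmul_eq_mul, map_inv₀, Complex.conj_ofReal, ← mul_assoc, ← mul_inv_rev,
    ← Complex.ofReal_mul, Real.mul_self_sqrt hchoose.le, Complex.ofReal_natCast,
    inv_mul_cancel_left₀ (mod_cast hchoose.ne')]

theorem stmt11_general (d k t : ℕ) (ht : t ≤ k)
    (φ φ' : Cvec (d + 1)) (hφ : ‖φ‖ = 1)
    (hφ0 : (inner ℂ (EuclideanSpace.single (0 : Fin (d + 1)) (1 : ℂ)) φ : ℂ) = 0)
    (hφ'0 : (inner ℂ (EuclideanSpace.single (0 : Fin (d + 1)) (1 : ℂ)) φ' : ℂ) = 0) :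
    tensorInner d k (phiT d k t φ') (phiT d k t φ) = (inner ℂ φ' φ : ℂ) ^ t ∧
    tensorInner d k (phiT d k t φ) (phiT d k t φ) = 1 := by
  refine ⟨tensorInner_phiT ht hφ'0, ?_⟩
  rw [tensorInner_phiT ht hφ0, inner_self_eq_norm_sq_to_K, hφ]
  norm_num

/-- For unit vectors `φ, φ' ⊥ e₀` in `ℂ^{d+1}`,
`⟨φ'_t, φ_t⟩ = ⟨φ', φ⟩^t`; in particular `φ_t` is a unit vector, so the map
`φ^{⊗t} ⊗ e₀^{⊗(k−t)} ↦ φ_t` preserves inner products. -/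
theorem stmt11 (d k t : ℕ) (hd : 1 ≤ d) (hk : 1 ≤ k) (ht : t ≤ k)
    (φ φ' : Cvec (d + 1)) (hφ : ‖φ‖ = 1) (hφ' : ‖φ'‖ = 1)
    (hφ0 : (inner ℂ (EuclideanSpace.single (0 : Fin (d + 1)) (1 : ℂ)) φ : ℂ) = 0)
    (hφ'0 : (inner ℂ (EuclideanSpace.single (0 : Fin (d + 1)) (1 : ℂ)) φ' : ℂ) = 0) :
    tensorInner d k (phiT d k t φ') (phiT d k t φ) = (inner ℂ φ' φ : ℂ) ^ t ∧
    tensorInner d k (phiT d k t φ) (phiT d k t φ) = 1 :=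
  stmt11_general d k t ht φ φ' hφ hφ0 hφ'0

end
end

section
/- Let d ≥ 1, m ≥ 1, and let p, q be probability measures on Fin d. On the product space (Fin m → Fin d) × (Fin m → Fin d) equipped with the measure (⊗_{j<m} p) × (⊗_{j<m} q) (i.e., x₁,…,x_m are i.i.d. with law p, independent of y₁,…,y_m i.i.d. with law q), define the collision estimator g̃(x,y) = m^{-2} Σ_{j,k<m} 1[x_j = y_k], and let g = Σ_{b} p({b})·q({b}). Then E[g̃] = g, and Var(g̃) ≤ g/m² + (1/m)·(Σ_b p({b})·q({b})² + Σ_b p({b})²·q({b})). -/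
/-!
Writing `N_b(x)` for the number of coordinates of `x` equal to `b`, the estimator is
`m⁻² Σ_b N_b(x) N_b(y)`. Since `x` and `y` are independent, its first two moments factor into
moments of the occupation counts of a single i.i.d. sample, and those follow from
`E[1[x_j = b] 1[x_j' = c]] = δ_{bc} p_b` for `j = j'` and `p_b p_c` for `j ≠ j'`.
This gives the second moment exactly, `(g + (m - 1)(A + B) + (m - 1)² g²) / m²` with
`A = Σ_b p_b q_b²` and `B = Σ_b p_b² q_b`; the bound follows from `(m - 1) / m² ≤ 1 / m` and
`(m - 1)² ≤ m²`.
-/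

open MeasureTheory

noncomputable section

/-- The collision estimator `g̃(x,y) = m⁻² Σ_{j,k} 1[x_j = y_k]`. -/
def collisionEst (d m : ℕ) (xy : (Fin m → Fin d) × (Fin m → Fin d)) : ℝ :=
  ((m : ℝ) ^ 2)⁻¹ * ∑ j : Fin m, ∑ k : Fin m, (if xy.1 j = xy.2 k then (1 : ℝ) else 0)

open Finset

theorem sum_sum_ite_eq {ι R : Type*} [Fintype ι] [DecidableEq ι] [CommRing R] (u v : R) :
    ∑ j : ι, ∑ j' : ι, (if j = j' then u else v)
      = Fintype.card ι * u + Fintype.card ι * (Fintype.card ι - 1) * v := by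
  have h (j j' : ι) : (if j = j' then u else v) = (if j = j' then u - v else 0) + v := by
    split_ifs <;> ring
  simp only [h, sum_add_distrib, sum_ite_eq, mem_univ, if_true, sum_const, card_univ, nsmul_eq_mul]
  ring

theorem integral_comp_eval_mul_comp_eval {ι α : Type*} [Fintype ι] [DecidableEq ι]
    [MeasurableSpace α] (μ : Measure α) [IsProbabilityMeasure μ] {i j : ι} (hij : i ≠ j)
    (f g : α → ℝ) :
    ∫ x, f (x i) * g (x j) ∂Measure.pi (fun _ : ι ↦ μ) = (∫ a, f a ∂μ) * ∫ a, g a ∂μ := by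
  let F (k : ι) (a : α) : ℝ := (if k = i then f a else 1) * (if k = j then g a else 1)
  have hF (k : ι) : ∫ a, F k a ∂μ
      = (if k = i then ∫ a, f a ∂μ else 1) * (if k = j then ∫ a, g a ∂μ else 1) := by
    by_cases hki : k = i
    · simp [F, hki, hij]
    · by_cases hkj : k = j <;> simp [F, hki, hkj, hij.symm]
  calc ∫ x, f (x i) * g (x j) ∂Measure.pi (fun _ : ι ↦ μ)
      = ∫ x, ∏ k, F k (x k) ∂Measure.pi (fun _ : ι ↦ μ) := by
        simp only [F, prod_mul_distrib, Fintype.prod_ite_eq']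
    _ = (∫ a, f a ∂μ) * ∫ a, g a ∂μ := by
        rw [integral_fintype_prod_eq_prod]
        simp only [hF, prod_mul_distrib, Fintype.prod_ite_eq']

section Occurrences

variable {ι α : Type*} [Fintype ι] [Fintype α] [DecidableEq α] [MeasurableSpace α]
  [MeasurableSingletonClass α] (μ : Measure α) [IsProbabilityMeasure μ]

def occurrences (x : ι → α) (b : α) : ℝ := ∑ j, if x j = b then 1 else 0

theorem integral_ite_eq_measureReal (b : α) :
    ∫ a, (if a = b then (1 : ℝ) else 0) ∂μ = μ.real {b} := by
  rw [integral_fintype Integrable.of_finite]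
  simp

theorem integral_ite_eq_mul_ite_eq (b c : α) :
    ∫ a, (if a = b then (1 : ℝ) else 0) * (if a = c then 1 else 0) ∂μ
      = if b = c then μ.real {b} else 0 := by
  rw [integral_fintype Integrable.of_finite]
  by_cases hbc : b = c
  · simp [hbc]
  · simp [hbc, Ne.symm hbc]

theorem integral_occurrences (b : α) :
    ∫ x, occurrences x b ∂Measure.pi (fun _ : ι ↦ μ) = Fintype.card ι * μ.real {b} := by
  simp_rw [occurrences, integral_finsetSum _ fun _ _ ↦ Integrable.of_finite,
    integral_comp_eval (μ := fun _ : ι ↦ μ) (f := fun a ↦ if a = b then (1 : ℝ) else 0)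
      (by fun_prop), integral_ite_eq_measureReal]
  simp

variable [DecidableEq ι]

theorem integral_ite_eval_mul_ite_eval (j j' : ι) (b c : α) :
    ∫ x, (if x j = b then (1 : ℝ) else 0) * (if x j' = c then 1 else 0)
        ∂Measure.pi (fun _ : ι ↦ μ)
      = if j = j' then (if b = c then μ.real {b} else 0) else μ.real {b} * μ.real {c} := by
  by_cases hj : j = j'
  · subst hj
    rw [if_pos rfl, integral_comp_eval (μ := fun _ : ι ↦ μ)
      (f := fun a ↦ (if a = b then (1 : ℝ) else 0) * (if a = c then 1 else 0)) (by fun_prop),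
      integral_ite_eq_mul_ite_eq]
  · rw [if_neg hj, integral_comp_eval_mul_comp_eval μ hj (fun a ↦ if a = b then (1 : ℝ) else 0)
      (fun a ↦ if a = c then 1 else 0), integral_ite_eq_measureReal, integral_ite_eq_measureReal]

theorem integral_occurrences_mul_occurrences (b c : α) :
    ∫ x, occurrences x b * occurrences x c ∂Measure.pi (fun _ : ι ↦ μ)
      = Fintype.card ι * (if b = c then μ.real {b} else 0)
        + Fintype.card ι * (Fintype.card ι - 1) * (μ.real {b} * μ.real {c}) := by
  simp_rw [occurrences, sum_mul_sum, integral_finsetSum _ fun _ _ ↦ Integrable.of_finite,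
    integral_ite_eval_mul_ite_eval]
  exact sum_sum_ite_eq _ _

end Occurrences

theorem sum_sum_diag_add_outer_mul_diag_add_outer {α : Type*} [Fintype α] [DecidableEq α]
    (P Q : α → ℝ) (n r : ℝ) :
    ∑ b, ∑ c, (n * (if b = c then P b else 0) + r * (P b * P c))
        * (n * (if b = c then Q b else 0) + r * (Q b * Q c))
      = n ^ 2 * ∑ b, P b * Q b + n * r * (∑ b, P b * Q b ^ 2 + ∑ b, P b ^ 2 * Q b)
        + r ^ 2 * (∑ b, P b * Q b) ^ 2 := by
  have h (b c : α) : (n * (if b = c then P b else 0) + r * (P b * P c))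
        * (n * (if b = c then Q b else 0) + r * (Q b * Q c))
      = (if b = c then n ^ 2 * (P b * Q b) + n * r * (P b * Q c ^ 2 + P c ^ 2 * Q b) else 0)
        + r ^ 2 * (P b * Q b) * (P c * Q c) := by
    split_ifs with hbc
    · subst hbc; ring
    · ring
  simp only [h, sum_add_distrib, sum_ite_eq, mem_univ, if_true, ← mul_sum, ← sum_mul]
  ring

section Collision

variable {d m : ℕ} (p q : Measure (Fin d)) [IsProbabilityMeasure p] [IsProbabilityMeasure q]

theorem collisionEst_eq_sum_occurrences (xy : (Fin m → Fin d) × (Fin m → Fin d)) :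
    collisionEst d m xy = ((m : ℝ) ^ 2)⁻¹ * ∑ b, occurrences xy.1 b * occurrences xy.2 b := by
  have h (a a' : Fin d) :
      ∑ b, (if a = b then (1 : ℝ) else 0) * (if a' = b then 1 else 0)
        = if a = a' then 1 else 0 := by
    simp only [boole_mul, sum_ite_eq, mem_univ, if_true, eq_comm]
  simp_rw [collisionEst, occurrences, sum_mul_sum]
  congr 1
  symm
  rw [sum_comm]
  refine sum_congr rfl fun j _ ↦ ?_
  rw [sum_comm]
  exact sum_congr rfl fun k _ ↦ h _ _

theorem integral_collisionEst (hm : m ≠ 0) :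
    ∫ xy, collisionEst d m xy ∂(Measure.pi fun _ : Fin m ↦ p).prod (Measure.pi fun _ ↦ q)
      = ∑ b, p.real {b} * q.real {b} := by
  have h (b : Fin d) :
      ∫ xy : (Fin m → Fin d) × (Fin m → Fin d), occurrences xy.1 b * occurrences xy.2 b
          ∂(Measure.pi fun _ : Fin m ↦ p).prod (Measure.pi fun _ ↦ q)
        = m * p.real {b} * (m * q.real {b}) := by
    rw [integral_prod_mul (fun x : Fin m → Fin d ↦ occurrences x b) (fun y ↦ occurrences y b),
      integral_occurrences, integral_occurrences, Fintype.card_fin]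
  simp_rw [collisionEst_eq_sum_occurrences]
  rw [integral_const_mul, integral_finsetSum _ fun _ _ ↦ Integrable.of_finite, mul_sum]
  refine sum_congr rfl fun b _ ↦ ?_
  rw [h]
  field_simp

theorem integral_collisionEst_sq (hm : m ≠ 0) :
    ∫ xy, collisionEst d m xy ^ 2 ∂(Measure.pi fun _ : Fin m ↦ p).prod (Measure.pi fun _ ↦ q)
      = (∑ b, p.real {b} * q.real {b}
          + (m - 1) * (∑ b, p.real {b} * q.real {b} ^ 2 + ∑ b, p.real {b} ^ 2 * q.real {b})
          + (m - 1) ^ 2 * (∑ b, p.real {b} * q.real {b}) ^ 2) / m ^ 2 := by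
  have hsq (xy : (Fin m → Fin d) × (Fin m → Fin d)) : collisionEst d m xy ^ 2
      = ((m : ℝ) ^ 2)⁻¹ ^ 2 * ∑ b, ∑ c, (occurrences xy.1 b * occurrences xy.1 c)
          * (occurrences xy.2 b * occurrences xy.2 c) := by
    rw [collisionEst_eq_sum_occurrences, mul_pow, sq (∑ b, _), sum_mul_sum]
    simp only [mul_mul_mul_comm]
  have h (b c : Fin d) :
      ∫ xy : (Fin m → Fin d) × (Fin m → Fin d),
          (occurrences xy.1 b * occurrences xy.1 c) * (occurrences xy.2 b * occurrences xy.2 c)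
          ∂(Measure.pi fun _ : Fin m ↦ p).prod (Measure.pi fun _ ↦ q)
        = (m * (if b = c then p.real {b} else 0) + m * (m - 1) * (p.real {b} * p.real {c}))
          * (m * (if b = c then q.real {b} else 0) + m * (m - 1) * (q.real {b} * q.real {c})) := by
    rw [integral_prod_mul (fun x : Fin m → Fin d ↦ occurrences x b * occurrences x c)
      (fun y ↦ occurrences y b * occurrences y c), integral_occurrences_mul_occurrences,
      integral_occurrences_mul_occurrences, Fintype.card_fin]
  simp_rw [hsq]
  rw [integral_const_mul, integral_finsetSum _ fun _ _ ↦ Integrable.of_finite]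
  simp_rw [integral_finsetSum _ fun _ _ ↦ Integrable.of_finite, h]
  rw [sum_sum_diag_add_outer_mul_diag_add_outer]
  field_simp

end Collision

theorem variance_bound_of_second_moment {M g s : ℝ} (hM : 1 ≤ M) (hs : 0 ≤ s) :
    (g + (M - 1) * s + (M - 1) ^ 2 * g ^ 2) / M ^ 2 - g ^ 2 ≤ g / M ^ 2 + 1 / M * s := by
  have hM0 : M ≠ 0 := by positivity
  have hgap : g / M ^ 2 + 1 / M * s - ((g + (M - 1) * s + (M - 1) ^ 2 * g ^ 2) / M ^ 2 - g ^ 2)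
      = (s + (2 * M - 1) * g ^ 2) / M ^ 2 := by
    field_simp
    ring
  have : 0 ≤ (s + (2 * M - 1) * g ^ 2) / M ^ 2 := by
    apply div_nonneg _ (sq_nonneg M)
    nlinarith [sq_nonneg g]
  linarith

theorem stmt14_general (d m : ℕ) (hm : 1 ≤ m)
    (p q : Measure (Fin d)) [IsProbabilityMeasure p] [IsProbabilityMeasure q] :
    (∫ xy : (Fin m → Fin d) × (Fin m → Fin d), collisionEst d m xy
        ∂((Measure.pi fun _ : Fin m => p).prod (Measure.pi fun _ : Fin m => q)))
      = ∑ b : Fin d, (p {b}).toReal * (q {b}).toReal ∧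
    (∫ xy : (Fin m → Fin d) × (Fin m → Fin d), (collisionEst d m xy) ^ 2
        ∂((Measure.pi fun _ : Fin m => p).prod (Measure.pi fun _ : Fin m => q)))
      - (∑ b : Fin d, (p {b}).toReal * (q {b}).toReal) ^ 2
      ≤ (∑ b : Fin d, (p {b}).toReal * (q {b}).toReal) / (m : ℝ) ^ 2
        + (1 / (m : ℝ)) *
            (∑ b : Fin d, (p {b}).toReal * (q {b}).toReal ^ 2
              + ∑ b : Fin d, (p {b}).toReal ^ 2 * (q {b}).toReal) := by
  have hm0 : m ≠ 0 := Nat.one_le_iff_ne_zero.mp hm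
  simp only [← measureReal_def]
  refine ⟨integral_collisionEst p q hm0, ?_⟩
  rw [integral_collisionEst_sq p q hm0]
  refine variance_bound_of_second_moment (by exact_mod_cast hm) ?_
  exact add_nonneg (sum_nonneg fun _ _ ↦ by positivity) (sum_nonneg fun _ _ ↦ by positivity)

/-- The collision estimator is unbiased for the inner product
`g = Σ_b p_b q_b` of two distributions on `Fin d`, and its variance is at most
`g/m² + (Σ_b p_b q_b² + Σ_b p_b² q_b)/m`. -/
theorem stmt14 (d m : ℕ) (hd : 1 ≤ d) (hm : 1 ≤ m)
    (p q : Measure (Fin d)) [IsProbabilityMeasure p] [IsProbabilityMeasure q] :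
    (∫ xy : (Fin m → Fin d) × (Fin m → Fin d), collisionEst d m xy
        ∂((Measure.pi fun _ : Fin m => p).prod (Measure.pi fun _ : Fin m => q)))
      = ∑ b : Fin d, (p {b}).toReal * (q {b}).toReal ∧
    (∫ xy : (Fin m → Fin d) × (Fin m → Fin d), (collisionEst d m xy) ^ 2
        ∂((Measure.pi fun _ : Fin m => p).prod (Measure.pi fun _ : Fin m => q)))
      - (∑ b : Fin d, (p {b}).toReal * (q {b}).toReal) ^ 2
      ≤ (∑ b : Fin d, (p {b}).toReal * (q {b}).toReal) / (m : ℝ) ^ 2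
        + (1 / (m : ℝ)) *
            (∑ b : Fin d, (p {b}).toReal * (q {b}).toReal ^ 2
              + ∑ b : Fin d, (p {b}).toReal ^ 2 * (q {b}).toReal) :=
  stmt14_general d m hm p q

end
end
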